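/- Let n, c ∈ ℕ with n, c ≥ 1, let X be an ℝ^n-valued random variable whose law is absolutely continuous with respect to Lebesgue measure on ℝ^n, and let h_1, …, h_c : ℝ^n → ℝ be non-constant real analytic functions. Then P(∃ i ∈ {1, …, c} : h_i(X) = 0) = 0. -/
import Mathlib


open MeasureTheory

/-- 1D: zero set of a not-identically-zero real analytic function is countable. -/
lemma analytic_zero_set_countable (f : ℝ → ℝ) (hf : ∀ x, AnalyticAt ℝ f x)
    (hne : ∃ x, f x ≠ 0) : {x : ℝ | f x = 0}.Countable := by
  set Z : Set ℝ := {x : ℝ | f x = 0} with hZ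
  have hisol : ∀ z ∈ Z, ∀ᶠ y in nhdsWithin z ({z}ᶜ), f y ≠ 0 := by
    intro z hz
    rcases (hf z).eventually_eq_zero_or_eventually_ne_zero with h0 | h1
    · exfalso
      obtain ⟨x, hx⟩ := hne
      have : Set.EqOn f 0 Set.univ := by
        apply AnalyticOnNhd.eqOn_zero_of_preconnected_of_eventuallyEq_zero
          (fun y _ => hf y) isPreconnected_univ (Set.mem_univ z)
        exact h0
      exact hx (this (Set.mem_univ x))
    · exact h1
  -- Z is discrete
  have hdisc : DiscreteTopology Z := by
    rw [discreteTopology_subtype_iff]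
    intro z hz
    have h1 := hisol z hz
    rw [← Filter.empty_mem_iff_bot]
    have hsub : Z \ {z} ⊆ {z}ᶜ := fun y hy => hy.2
    have h2 : Z \ {z} ∈ nhdsWithin z (Z \ {z}) := self_mem_nhdsWithin
    have h3 : {y | f y ≠ 0} ∈ nhdsWithin z (Z \ {z}) :=
      nhdsWithin_mono z hsub h1
    have hm : {y | f y ≠ 0} ∩ Z ∈ nhdsWithin z ({z}ᶜ) ⊓ Filter.principal Z :=
      Filter.inter_mem (Filter.mem_inf_of_left h1)
        (Filter.mem_inf_of_right (Filter.mem_principal_self _))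
    refine Filter.mem_of_superset hm ?_
    rintro y ⟨hy1, hy2⟩
    exact absurd hy2 hy1
  -- Z is closed
  have hcont : Continuous f := continuous_iff_continuousAt.2 fun x => (hf x).continuousAt
  have hclosed : IsClosed Z := isClosed_eq hcont continuous_const
  exact hclosed.isLindelof.countable hdisc

lemma analytic_zero_set_null_1d (f : ℝ → ℝ) (hf : ∀ x, AnalyticAt ℝ f x)
    (hne : ∃ x, f x ≠ 0) : volume {x : ℝ | f x = 0} = 0 :=
  (analytic_zero_set_countable f hf hne).measure_zero _

/-- Multidimensional: zero set of a not-identically-zero real analytic function is null. -/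
lemma analytic_zero_set_null (n : ℕ) (f : (Fin n → ℝ) → ℝ)
    (hf : ∀ x, AnalyticAt ℝ f x) (hne : ∃ x, f x ≠ 0) :
    volume {x : Fin n → ℝ | f x = 0} = 0 := by
  induction n with
  | zero =>
    obtain ⟨x, hx⟩ := hne
    have : {x : Fin 0 → ℝ | f x = 0} = ∅ := by
      ext y
      simp only [Set.mem_setOf_eq, Set.mem_empty_iff_false, iff_false]
      have : y = x := Subsingleton.elim _ _
      rw [this]; exact hx
    rw [this]; simp
  | succ n ih =>
    set e := MeasurableEquiv.piFinSuccAbove (fun _ : Fin (n + 1) => ℝ) 0 with he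
    have mp : MeasurePreserving e volume volume :=
      volume_preserving_piFinSuccAbove (fun _ : Fin (n + 1) => ℝ) 0
    have hcont : Continuous f := continuous_iff_continuousAt.2 fun x => (hf x).continuousAt
    have hZm : MeasurableSet {x : Fin (n + 1) → ℝ | f x = 0} :=
      (isClosed_eq hcont continuous_const).measurableSet
    -- transfer to the product
    have key : volume {x : Fin (n + 1) → ℝ | f x = 0}
        = volume (e.symm ⁻¹' {x | f x = 0}) := by
      exact ((MeasurePreserving.symm e mp).measure_preimage hZm.nullMeasurableSet).symm
    rw [key]
    -- the transported set
    set g : ℝ × (Fin n → ℝ) → ℝ := fun p => f (Fin.cons p.1 p.2) with hg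
    have hset : e.symm ⁻¹' {x | f x = 0} = {p : ℝ × (Fin n → ℝ) | g p = 0} := by
      ext p
      simp [e, g, MeasurableEquiv.piFinSuccAbove_symm_apply, Fin.insertNthEquiv,
        Fin.insertNth_zero']
    rw [hset]
    -- g is analytic
    have hL : ∀ p : ℝ × (Fin n → ℝ),
        AnalyticAt ℝ (fun q : ℝ × (Fin n → ℝ) => (Fin.cons q.1 q.2 : Fin (n + 1) → ℝ)) p := by
      intro p
      refine AnalyticAt.pi (𝕜 := ℝ) (Fm := fun _ : Fin (n + 1) => ℝ)
        (f := fun (j : Fin (n + 1)) (q : ℝ × (Fin n → ℝ)) => Fin.cons (α := fun _ => ℝ) q.1 q.2 j)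
        (e := p) ?_
      intro j
      induction j using Fin.cases with
      | zero =>
        simp only [Fin.cons_zero]
        exact analyticAt_fst
      | succ k =>
        simp only [Fin.cons_succ]
        exact ((ContinuousLinearMap.proj k :
          (Fin n → ℝ) →L[ℝ] ℝ).analyticAt _).comp analyticAt_snd
    have hganal : ∀ p, AnalyticAt ℝ g p := fun p => (hf _).comp (hL p)
    -- measurability of the transported set
    have hgcont : Continuous g := continuous_iff_continuousAt.2 fun p => (hganal p).continuousAt
    have hGm : MeasurableSet {p : ℝ × (Fin n → ℝ) | g p = 0} :=
      (isClosed_eq hgcont continuous_const).measurableSet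
    -- some point where g ≠ 0
    obtain ⟨x₀, hx₀⟩ := hne
    set p₀ : ℝ × (Fin n → ℝ) := (x₀ 0, fun k => x₀ k.succ) with hp₀
    have hconsx : (Fin.cons p₀.1 p₀.2 : Fin (n + 1) → ℝ) = x₀ := by
      funext j
      induction j using Fin.cases with
      | zero => simp [hp₀]
      | succ k => simp [hp₀]
    have hgp₀ : g p₀ ≠ 0 := by
      rw [hg]
      simpa [hconsx] using hx₀
    -- Fubini
    rw [Measure.volume_eq_prod, Measure.measure_prod_null hGm]
    -- bad set of t where the slice is identically zero
    have hslice : ∀ t : ℝ, (∃ y, g (t, y) ≠ 0) →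
        volume {y : Fin n → ℝ | g (t, y) = 0} = 0 := by
      intro t ht
      apply ih (fun y => g (t, y))
      · intro y
        exact (hganal (t, y)).curry_right
      · exact ht
    have hbad : volume {t : ℝ | g (t, p₀.2) = 0} = 0 := by
      apply analytic_zero_set_null_1d
      · intro t
        exact (hganal (t, p₀.2)).curry_left
      · exact ⟨p₀.1, hgp₀⟩
    have : ∀ᵐ t ∂(volume : Measure ℝ), g (t, p₀.2) ≠ 0 := by
      rw [MeasureTheory.ae_iff]
      simpa using hbad
    filter_upwards [this] with t ht
    simp only [Pi.zero_apply]
    have : Prod.mk t ⁻¹' {p : ℝ × (Fin n → ℝ) | g p = 0} = {y | g (t, y) = 0} := rfl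
    rw [this]
    exact hslice t ⟨p₀.2, ht⟩

/-- If the law of `X` is absolutely continuous w.r.t. Lebesgue measure and
`h₁, …, h_c` are non-constant real analytic functions, then with probability zero
some `h_i(X)` vanishes. -/
theorem stmt_6 (n c : ℕ) (hn : 1 ≤ n) (hc : 1 ≤ c)
    {Ω : Type*} [MeasurableSpace Ω] (P : Measure Ω) [IsProbabilityMeasure P]
    (X : Ω → (Fin n → ℝ)) (hXm : Measurable X)
    (hX : (Measure.map X P).AbsolutelyContinuous volume)
    (h : Fin c → (Fin n → ℝ) → ℝ)
    (hh : ∀ i, ∀ x, AnalyticAt ℝ (h i) x)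
    (hhnc : ∀ i, ∃ x y, h i x ≠ h i y) :
    P {ω | ∃ i : Fin c, h i (X ω) = 0} = 0 := by
  set S : Set (Fin n → ℝ) := ⋃ i : Fin c, {x | h i x = 0} with hS
  have hconti : ∀ i, Continuous (h i) :=
    fun i => continuous_iff_continuousAt.2 fun x => (hh i x).continuousAt
  have hSm : MeasurableSet S :=
    MeasurableSet.iUnion fun i => (isClosed_eq (hconti i) continuous_const).measurableSet
  have hSnull : volume S = 0 := by
    refine measure_iUnion_null fun i => ?_
    apply analytic_zero_set_null n (h i) (hh i)
    obtain ⟨x, y, hxy⟩ := hhnc i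
    by_cases hx : h i x = 0
    · exact ⟨y, fun hy => hxy (by rw [hx, hy])⟩
    · exact ⟨x, hx⟩
  have heq : {ω | ∃ i : Fin c, h i (X ω) = 0} = X ⁻¹' S := by
    ext ω; simp [S]
  rw [heq, ← Measure.map_apply hXm hSm]
  exact hX hSnull
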